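/- arXiv:1904.06797 — 3 statements merged into one kernel-verified Lean document; each statement's English description precedes it below -/
import Mathlib

section
/- If h is a harmonic polynomial on ℝⁿ that is homogeneous of degree ν, then for every integer k ≥ 1, Δₙ(|x|^{2k} h(x)) = 2k(n+2k+2ν−2)|x|^{2k−2} h(x). -/
/-- The Laplacian on ℝⁿ, as the sum of second partial derivatives. -/
noncomputable def lap {n : ℕ} (f : (Fin n → ℝ) → ℝ) (x : Fin n → ℝ) : ℝ :=
  ∑ j, fderiv ℝ (fun y => fderiv ℝ f y (Pi.single j 1)) x (Pi.single j 1)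

open MvPolynomial

private theorem eval_single_single {n : ℕ} (x : Fin n → ℝ) (i j : Fin n) :
    eval x ((Pi.single (M := fun _ => MvPolynomial (Fin n) ℝ) i 1) j) =
      Pi.single (M := fun _ => ℝ) i 1 j := by
  rcases eq_or_ne j i with rfl | hne
  · simp
  · simp [Pi.single_eq_of_ne hne]

private theorem hasFDerivAt_mvpoly {n : ℕ} (p : MvPolynomial (Fin n) ℝ) (x : Fin n → ℝ) :
    HasFDerivAt (fun y => eval y p)
      (∑ j, MvPolynomial.eval x (pderiv j p) • (ContinuousLinearMap.proj j :
        (Fin n → ℝ) →L[ℝ] ℝ)) x := by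
  induction p using MvPolynomial.induction_on with
  | C a =>
      simp only [eval_C, pderiv_C, map_zero, zero_smul, Finset.sum_const_zero]
      exact hasFDerivAt_const a x
  | add p q hp hq =>
      have := hp.add hq
      simp only [map_add, add_smul, Finset.sum_add_distrib]
      exact this.congr_of_eventuallyEq (by filter_upwards with y; simp)
  | mul_X p i hp =>
      have hXi := hasFDerivAt_apply (𝕜 := ℝ) i x
      have H := hp.mul hXi
      simp only [eval_mul, eval_X]
      convert H using 1
      case e'_4 => rfl
      case e'_5 => rfl
      case e'_6 => rfl
      case e'_8 => rfl
      case e'_9 => rfl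
      case e'_11 => rfl
      rw [Finset.smul_sum]
      have key : ∀ j : Fin n, eval x (pderiv j (p * X i)) •
          (ContinuousLinearMap.proj j : (Fin n → ℝ) →L[ℝ] ℝ)
          = (eval x p * (Pi.single (M := fun _ => ℝ) i 1) j) • ContinuousLinearMap.proj j
            + x i • (eval x (pderiv j p) • ContinuousLinearMap.proj j) := by
        intro j
        rw [pderiv_mul, pderiv_X, map_add, eval_mul, eval_mul, eval_X, add_smul,
          eval_single_single]
        have : Pi.single (M := fun _ => ℝ) j 1 i = Pi.single (M := fun _ => ℝ) i 1 j := by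
          rcases eq_or_ne j i with rfl | hne
          · rfl
          · simp [Pi.single_eq_of_ne hne, Pi.single_eq_of_ne (Ne.symm hne)]
        rw [this]
        module
      rw [Finset.sum_congr rfl (fun j _ => key j), Finset.sum_add_distrib]
      congr 1
      rw [Finset.sum_eq_single i]
      · simp
      · intro b _ hb; simp [Pi.single_eq_of_ne hb]
      · simp

private theorem fderiv_eval {n : ℕ} (p : MvPolynomial (Fin n) ℝ) (x : Fin n → ℝ) (j : Fin n) :
    fderiv ℝ (fun y => eval y p) x (Pi.single j 1) = eval x (pderiv j p) := by
  rw [(hasFDerivAt_mvpoly p x).fderiv, ContinuousLinearMap.sum_apply]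
  rw [Finset.sum_eq_single j]
  · simp
  · intro b _ hb
    simp [Pi.single_eq_of_ne hb]
  · simp

private theorem lap_eval {n : ℕ} (p : MvPolynomial (Fin n) ℝ) (x : Fin n → ℝ) :
    lap (fun y => eval y p) x = eval x (∑ j, pderiv j (pderiv j p)) := by
  unfold lap
  rw [map_sum]
  refine Finset.sum_congr rfl fun j _ => ?_
  have h1 : (fun y => fderiv ℝ (fun z => eval z p) y (Pi.single j 1))
      = fun y => eval y (pderiv j p) := funext fun y => fderiv_eval p y j
  rw [h1, fderiv_eval]

/-- Euler's identity for homogeneous polynomials. -/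
private theorem euler_identity {n ν : ℕ} {h : MvPolynomial (Fin n) ℝ}
    (hhom : h.IsHomogeneous ν) :
    ∑ j, X j * pderiv j h = (ν : MvPolynomial (Fin n) ℝ) * h := by
  have key : ∀ d ∈ h.support, ∀ j : Fin n,
      X j * pderiv j (monomial d (coeff d h)) = monomial d (coeff d h * d j) := by
    intro d _ j
    rw [pderiv_monomial, X, monomial_mul]
    rcases Nat.eq_zero_or_pos (d j) with h0 | hpos
    · simp [h0]
    · rw [add_tsub_cancel_of_le (Finsupp.single_le_iff.2 hpos), one_mul]
  have deg : ∀ d ∈ h.support, (∑ j : Fin n, (d j : ℝ)) = (ν : ℝ) := by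
    intro d hd
    have h1 : Finsupp.weight 1 d = ν := hhom (mem_support_iff.1 hd)
    have h2 : d.degree = ν := by rw [Finsupp.degree_eq_weight_one]; exact h1
    have h3 : ∑ j : Fin n, d j = d.degree := by
      rw [Finsupp.degree]
      exact (Finset.sum_subset (Finset.subset_univ _)
        (fun x _ hx => Finsupp.notMem_support_iff.1 hx)).symm
    rw [← Nat.cast_sum, h3, h2]
  conv_lhs => rw [h.as_sum]
  conv_rhs => rw [h.as_sum]
  rw [Finset.mul_sum]
  simp only [map_sum, Finset.mul_sum]
  rw [Finset.sum_comm]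
  refine Finset.sum_congr rfl fun d hd => ?_
  rw [Finset.sum_congr rfl (fun j _ => key d hd j)]
  rw [← map_sum (monomial d), ← Finset.mul_sum]
  rw [deg d hd, ← (map_natCast (C : ℝ →+* MvPolynomial (Fin n) ℝ) ν), C_mul_monomial,
    mul_comm]

private theorem pderiv_sumsq {n : ℕ} (j : Fin n) :
    pderiv j (∑ i, (X i : MvPolynomial (Fin n) ℝ) ^ 2) = 2 * X j := by
  rw [map_sum, Finset.sum_eq_single j]
  · rw [pderiv_pow, pderiv_X_self]; ring
  · intro b _ hb
    rw [pderiv_pow, pderiv_X_of_ne hb, mul_zero]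
  · simp

/-- If h is a harmonic polynomial homogeneous of degree ν, then
Δ(|x|^{2k} h(x)) = 2k(n+2k+2ν−2)|x|^{2k−2} h(x) for every integer k ≥ 1. -/
theorem laplacian_norm_pow_mul_harmonic (n ν : ℕ) (h : MvPolynomial (Fin n) ℝ)
    (hhom : h.IsHomogeneous ν)
    (hharm : ∀ x : Fin n → ℝ, lap (fun y => MvPolynomial.eval y h) x = 0)
    (k : ℕ) (hk : 1 ≤ k) (x : Fin n → ℝ) :
    lap (fun y => (∑ j, y j ^ 2) ^ k * MvPolynomial.eval y h) x
      = 2 * k * ((n : ℝ) + 2 * k + 2 * ν - 2) * (∑ j, x j ^ 2) ^ (k - 1)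
          * MvPolynomial.eval x h := by
  classical
  set r : MvPolynomial (Fin n) ℝ := ∑ i, X i ^ 2 with hr
  have harm_poly : ∑ j, pderiv j (pderiv j h) = (0 : MvPolynomial (Fin n) ℝ) := by
    apply MvPolynomial.funext
    intro y
    rw [← lap_eval, hharm y, map_zero]
  have hfun : lap (fun y => (∑ j, y j ^ 2) ^ k * MvPolynomial.eval y h) x
      = lap (fun y => eval y (r ^ k * h)) x := by
    congr 1
    funext y
    simp [hr]
  rw [hfun, lap_eval]
  have perj : ∀ j : Fin n, pderiv j (pderiv j (r ^ k * h)) =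
      (4 * (k : MvPolynomial (Fin n) ℝ) * ((k - 1 : ℕ) : MvPolynomial (Fin n) ℝ)
          * (r ^ (k - 1 - 1) * h)) * X j ^ 2
        + 2 * (k : MvPolynomial (Fin n) ℝ) * (r ^ (k - 1) * h)
        + (4 * (k : MvPolynomial (Fin n) ℝ) * r ^ (k - 1)) * (X j * pderiv j h)
        + r ^ k * pderiv j (pderiv j h) := by
    intro j
    have pdr : pderiv j r = 2 * X j := by rw [hr]; exact pderiv_sumsq j
    have pd2 : pderiv j (2 : MvPolynomial (Fin n) ℝ) = 0 := by
      have h2 : (2 : MvPolynomial (Fin n) ℝ) = ((2 : ℕ) : MvPolynomial (Fin n) ℝ) := by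
        norm_cast
      rw [h2, Derivation.map_natCast]
    simp only [pderiv_mul, pderiv_pow, pdr, map_add,
      Derivation.map_natCast, pd2, pderiv_X_self]
    ring
  rw [Finset.sum_congr rfl fun j _ => perj j]
  simp only [Finset.sum_add_distrib, ← Finset.mul_sum, Finset.sum_const,
    Finset.card_univ, Fintype.card_fin, nsmul_eq_mul, ← hr]
  rw [euler_identity hhom, harm_poly, mul_zero]
  obtain ⟨m, rfl⟩ : ∃ m, k = m + 1 := ⟨k - 1, (Nat.succ_pred_eq_of_pos hk).symm⟩
  simp only [Nat.add_sub_cancel]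
  cases m with
  | zero =>
      simp only [hr, map_add, map_mul, map_pow, map_natCast, map_sum, eval_X, map_ofNat,
        map_zero]
      push_cast
      ring
  | succ m =>
      simp only [Nat.add_sub_cancel, hr, map_add, map_mul, map_pow, map_natCast, map_sum,
        eval_X, map_ofNat, map_zero]
      push_cast
      ring
end

section
/- For each k ∈ ℕ, N ∈ ℕ and parameters r, c > 0, the function u(x,t) = e^{k²c(t−r)+k x_n}/k^N on ℝⁿ×ℝ satisfies ∂u/∂t − c Δₙ u = 0; moreover for fixed x_n > 0 and t = r, u(x,r) = e^{k x_n}/k^N → +∞ as k → ∞, while for t ≤ r − δ (δ > 0 fixed), u(x,t) ≤ e^{−k²cδ + k x_n}/k^N → 0 as k → ∞, uniformly for x_n in any bounded interval. -/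
/-! Each derivative in `xₙ` multiplies `u_k` by `k` and each derivative in `t` by `k²c`, so
`∂ₜu_k = cΔu_k`. At `t = r` the size is `e^{k xₙ}/k^N`, which explodes for `xₙ > 0`, while for
`t ≤ r − δ` the factor `e^{−k²cδ}` wins over `e^{k xₙ}` because `k²` dominates `k`. -/

open Filter

theorem fderiv_comp_apply_single {n : ℕ} {g : ℝ → ℝ} {y : Fin n → ℝ} (j i : Fin n)
    (hg : DifferentiableAt ℝ g (y j)) :
    fderiv ℝ (fun y : Fin n → ℝ => g (y j)) y (Pi.single i 1)
      = deriv g (y j) * (Pi.single i 1 : Fin n → ℝ) j := by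
  have h : HasFDerivAt (fun y : Fin n → ℝ => g (y j))
      (deriv g (y j) • ContinuousLinearMap.proj (R := ℝ) (φ := fun _ : Fin n => ℝ) j) y :=
    hg.hasDerivAt.comp_hasFDerivAt y (hasFDerivAt_apply j y)
  rw [h.fderiv]
  simp

theorem lap_comp_apply {n : ℕ} {g : ℝ → ℝ} (j : Fin n) (x : Fin n → ℝ)
    (hg : Differentiable ℝ g) (hg' : DifferentiableAt ℝ (deriv g) (x j)) :
    lap (fun y => g (y j)) x = deriv (deriv g) (x j) := by
  have hfirst : ∀ i, (fun y => fderiv ℝ (fun y : Fin n → ℝ => g (y j)) y (Pi.single i 1))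
      = fun y => (fun s => deriv g s * (Pi.single i 1 : Fin n → ℝ) j) (y j) :=
    fun i => funext fun y => fderiv_comp_apply_single j i (hg _)
  simp only [lap, hfirst, fderiv_comp_apply_single j _ (hg'.mul_const _), deriv_mul_const hg']
  simp [Pi.single_apply]

theorem hasDerivAt_exp_const_add_mul_div (A k b s : ℝ) :
    HasDerivAt (fun s => Real.exp (A + k * s) / b) (Real.exp (A + k * s) / b * k) s := by
  refine ((((hasDerivAt_id' s).const_mul k).const_add A).exp.div_const b).congr_deriv ?_
  ring

theorem lap_exp_const_add_mul_apply_div {n : ℕ} (j : Fin n) (A k b : ℝ) (x : Fin n → ℝ) :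
    lap (fun y => Real.exp (A + k * y j) / b) x = Real.exp (A + k * x j) / b * k ^ 2 := by
  have hderiv :
      deriv (fun s => Real.exp (A + k * s) / b) = fun s => Real.exp (A + k * s) / b * k :=
    funext fun s => (hasDerivAt_exp_const_add_mul_div A k b s).deriv
  have hderiv2 (s : ℝ) := (hasDerivAt_exp_const_add_mul_div A k b s).mul_const k
  rw [lap_comp_apply (g := fun s => Real.exp (A + k * s) / b) j x
    (fun s => (hasDerivAt_exp_const_add_mul_div A k b s).differentiableAt)
    (hderiv ▸ (hderiv2 _).differentiableAt), hderiv, (hderiv2 _).deriv]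
  ring

theorem tendsto_exp_mul_div_pow_atTop (N : ℕ) {a : ℝ} (ha : 0 < a) :
    Tendsto (fun k : ℕ => Real.exp (k * a) / (k : ℝ) ^ N) atTop atTop := by
  have h := ((Real.tendsto_exp_div_pow_atTop N).comp
    (tendsto_id.atTop_mul_const ha)).atTop_mul_const (pow_pos ha N)
  have hreal : Tendsto (fun x : ℝ => Real.exp (x * a) / x ^ N) atTop atTop := by
    refine h.congr' ?_
    filter_upwards [eventually_gt_atTop 0] with x hx
    simp only [Function.comp, id, mul_pow]
    field_simp
  exact hreal.comp tendsto_natCast_atTop_atTop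

theorem tendsto_exp_neg_sq_mul_add_mul_div_pow (N : ℕ) {b : ℝ} (hb : 0 < b) (M : ℝ) :
    Tendsto (fun k : ℕ => Real.exp (-(k : ℝ) ^ 2 * b + k * M) / (k : ℝ) ^ N) atTop (nhds 0) := by
  have hexponent : Tendsto (fun k : ℕ => -(k : ℝ) ^ 2 * b + k * M) atTop atBot := by
    have hk := tendsto_natCast_atTop_atTop (R := ℝ)
    refine (hk.atTop_mul_atBot₀ (tendsto_atBot_add_const_left _ M
      (tendsto_neg_atTop_atBot.comp (hk.atTop_mul_const hb)))).congr fun k => ?_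
    simp only [Function.comp]
    ring
  refine squeeze_zero' (Eventually.of_forall fun k => by positivity) ?_
    (Real.tendsto_exp_atBot.comp hexponent)
  filter_upwards [eventually_ge_atTop 1] with k hk
  exact div_le_self (Real.exp_nonneg _) (one_le_pow₀ (by exact_mod_cast hk))

/-- The instability example: u_k(x,t) = e^{k²c(t−r)+k xₙ}/k^N solves ∂u/∂t − cΔu = 0; at
t = r it blows up as k → ∞ for xₙ > 0, while for t ≤ r − δ it is dominated by
e^{−k²cδ+k xₙ}/k^N, which tends to 0 uniformly for xₙ in any bounded interval. -/
theorem illposedness_example (n : ℕ) (hn : 1 ≤ n) (N : ℕ) (c r : ℝ) (hc : 0 < c) :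
    (∀ k : ℕ, 1 ≤ k → ∀ (x : Fin n → ℝ) (t : ℝ),
        deriv (fun s =>
            Real.exp ((k : ℝ) ^ 2 * c * (s - r) + k * x ⟨n - 1, by omega⟩) / (k : ℝ) ^ N) t
          - c * lap (fun y =>
              Real.exp ((k : ℝ) ^ 2 * c * (t - r) + k * y ⟨n - 1, by omega⟩) / (k : ℝ) ^ N) x
          = 0)
    ∧ (∀ k : ℕ, 1 ≤ k → ∀ x : Fin n → ℝ,
        Real.exp ((k : ℝ) ^ 2 * c * (r - r) + k * x ⟨n - 1, by omega⟩) / (k : ℝ) ^ N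
          = Real.exp (k * x ⟨n - 1, by omega⟩) / (k : ℝ) ^ N)
    ∧ (∀ a : ℝ, 0 < a →
        Tendsto (fun k : ℕ => Real.exp ((k : ℝ) * a) / (k : ℝ) ^ N) atTop atTop)
    ∧ (∀ δ : ℝ, 0 < δ → ∀ k : ℕ, 1 ≤ k → ∀ (x : Fin n → ℝ) (t : ℝ), t ≤ r - δ →
        Real.exp ((k : ℝ) ^ 2 * c * (t - r) + k * x ⟨n - 1, by omega⟩) / (k : ℝ) ^ N
          ≤ Real.exp (-(k : ℝ) ^ 2 * c * δ + k * x ⟨n - 1, by omega⟩) / (k : ℝ) ^ N)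
    ∧ (∀ δ : ℝ, 0 < δ → ∀ M : ℝ,
        Tendsto (fun k : ℕ => Real.exp (-(k : ℝ) ^ 2 * c * δ + (k : ℝ) * M) / (k : ℝ) ^ N)
          atTop (nhds 0)) := by
  refine ⟨fun k _ x t => ?_, fun k _ x => by simp,
    fun a ha => tendsto_exp_mul_div_pow_atTop N ha, fun δ _ k _ x t ht => ?_,
    fun δ hδ M => by simpa only [mul_assoc] using
      tendsto_exp_neg_sq_mul_add_mul_div_pow N (mul_pos hc hδ) M⟩
  · have htime : HasDerivAt (fun s => (k : ℝ) ^ 2 * c * (s - r) + k * x ⟨n - 1, by omega⟩)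
        ((k : ℝ) ^ 2 * c) t :=
      ((((hasDerivAt_id' t).sub_const r).const_mul _).add_const _).congr_deriv (mul_one _)
    rw [(htime.exp.div_const _).deriv, lap_exp_const_add_mul_apply_div]
    ring
  · have hexponent : (k : ℝ) ^ 2 * c * (t - r) ≤ -(k : ℝ) ^ 2 * c * δ := by
      nlinarith [mul_nonneg (sq_nonneg (k : ℝ)) hc.le]
    gcongr
end

section
/- Let μ, λ be constants with μ > 0 and 2μ+λ > 0, and φ₀ the Gaussian heat kernel. Then for each i, j the function φᵢⱼ(x,t) = φ₀(x, μt)δᵢⱼ + ∫_{μt}^{(2μ+λ)t} ∂²φ₀(x,s)/∂xⱼ∂xᵢ ds satisfies, for t > 0 and x ≠ 0, the parabolic Lamé system: ∂φᵢⱼ/∂t − μ Δₙ φᵢⱼ − (λ+μ) ∂/∂xᵢ (Σ_k ∂φ_{kj}/∂x_k) = 0. -/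
/-- The first partial derivative ∂f/∂xᵢ on ℝⁿ. -/
noncomputable def d1 {n : ℕ} (i : Fin n) (f : (Fin n → ℝ) → ℝ) (x : Fin n → ℝ) : ℝ :=
  fderiv ℝ f x (Pi.single i 1)

/-- The Gaussian heat kernel φ₀(x,t) = (2√(πt))^{−n} e^{−|x|²/(4t)}. -/
noncomputable def phi0 (n : ℕ) (x : Fin n → ℝ) (t : ℝ) : ℝ :=
  ((2 * Real.sqrt (Real.pi * t)) ^ n)⁻¹ * Real.exp (-(∑ i, x i ^ 2) / (4 * t))

/-- The components φᵢⱼ(x,t) = φ₀(x,μt)δᵢⱼ + ∫_{μt}^{(2μ+λ)t} ∂²φ₀(x,s)/∂xⱼ∂xᵢ ds of the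
fundamental solution of the parabolic Lamé operator. -/
noncomputable def PhiL (n : ℕ) (μ lam : ℝ) (i j : Fin n) (x : Fin n → ℝ) (t : ℝ) : ℝ :=
  phi0 n x (μ * t) * (if i = j then 1 else 0)
    + ∫ s in (μ * t)..((2 * μ + lam) * t),
        d1 j (fun y => d1 i (fun z => phi0 n z s) y) x

/-
Every spatial derivative of the heat kernel is a polynomial in `x` and `1 / s` times `φ₀`
(`∂ᵢφ₀ = hermite₁ i · φ₀`, `∂ⱼ∂ᵢφ₀ = hermite₂ i j · φ₀`, ...), so the heat equation `∂ₛφ₀ = Δφ₀`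
and its spatial derivatives `∂ₛ∂ⱼφ₀ = Σₖ ∂ₖ∂ₖ∂ⱼφ₀`, `∂ₛ∂ᵢ∂ⱼφ₀ = Δ∂ᵢ∂ⱼφ₀` become algebraic
identities between these coefficients. Write `H = ∂ᵢ∂ⱼφ₀` and `c = 2μ + λ`. Differentiating under
the integral sign and integrating these identities in `s` gives
`Δφᵢⱼ = δᵢⱼ ∂ₛφ₀(μt) + H(ct) − H(μt)` and `Σₖ ∂ₖφₖⱼ = ∂ⱼφ₀(ct)`, while moving the endpoints gives
`∂ₜφᵢⱼ = μ δᵢⱼ ∂ₛφ₀(μt) + c H(ct) − μ H(μt)`. The Lamé operator therefore leaves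
`(c − μ − (λ + μ)) H(ct) = 0`.
-/

open Real MeasureTheory Set Filter Topology intervalIntegral Metric

theorem uIcc_subset_Ioi {a b c : ℝ} (ha : c < a) (hb : c < b) : uIcc a b ⊆ Ioi c :=
  fun _ hs => lt_of_lt_of_le (lt_min ha hb) hs.1

theorem continuousOn_slice_of_continuousAt {E G : Type*} [TopologicalSpace E]
    [TopologicalSpace G] {H : E × ℝ → G} {S : Set ℝ}
    (hH : ∀ p : E × ℝ, p.2 ∈ S → ContinuousAt H p) (y : E) :
    ContinuousOn (fun s => H (y, s)) S :=
  fun s hs => ((hH (y, s) hs).comp (Continuous.prodMk_right y).continuousAt).continuousWithinAt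

theorem hasFDerivAt_intervalIntegral_of_continuousOn {E G : Type*} [NormedAddCommGroup E]
    [NormedSpace ℝ E] [ProperSpace E] [NormedAddCommGroup G] [NormedSpace ℝ G] {F : E → ℝ → G}
    {F' : E → ℝ → E →L[ℝ] G} {a b : ℝ} (hF : ∀ y, ContinuousOn (F y) (uIcc a b))
    (hF' : ContinuousOn (fun p : E × ℝ => F' p.1 p.2) (univ ×ˢ uIcc a b))
    (hdiff : ∀ y, ∀ s ∈ uIcc a b, HasFDerivAt (F · s) (F' y s) y) (x : E) :
    HasFDerivAt (fun y => ∫ s in a..b, F y s) (∫ s in a..b, F' x s) x := by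
  have hK : IsCompact (closedBall x 1 ×ˢ uIcc a b) := (isCompact_closedBall x 1).prod isCompact_uIcc
  obtain ⟨C, hC⟩ := hK.exists_bound_of_continuousOn (hF'.mono (prod_mono (subset_univ _) le_rfl))
  have hF'x : ContinuousOn (F' x) (uIcc a b) :=
    hF'.comp (Continuous.prodMk_right x).continuousOn fun _ hs => ⟨mem_univ x, hs⟩
  refine hasFDerivAt_integral_of_dominated_of_fderiv_le (bound := fun _ => C)
    (ball_mem_nhds x one_pos)
    (Eventually.of_forall fun y => ((hF y).mono uIoc_subset_uIcc).aestronglyMeasurable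
      measurableSet_uIoc)
    (hF x).intervalIntegrable
    ((hF'x.mono uIoc_subset_uIcc).aestronglyMeasurable measurableSet_uIoc)
    (Eventually.of_forall fun s hs y hy =>
      hC (y, s) ⟨ball_subset_closedBall hy, uIoc_subset_uIcc hs⟩)
    intervalIntegrable_const
    (Eventually.of_forall fun s hs y _ => hdiff y s (uIoc_subset_uIcc hs))

theorem hasDerivAt_intervalIntegral_mul_mul {G : Type*} [NormedAddCommGroup G] [NormedSpace ℝ G]
    [CompleteSpace G] {g : ℝ → G} (hg : ContinuousOn g (Ioi 0)) {a b t : ℝ} (ha : 0 < a)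
    (hb : 0 < b) (ht : 0 < t) :
    HasDerivAt (fun u => ∫ s in (a * u)..(b * u), g s) (b • g (b * t) - a • g (a * t)) t := by
  have hat : 0 < a * t := by positivity
  have hbt : 0 < b * t := by positivity
  have hcont : ∀ z, 0 < z → ContinuousAt g z := fun z hz => hg.continuousAt (Ioi_mem_nhds hz)
  have hmeas : ∀ z, 0 < z → StronglyMeasurableAtFilter g (𝓝 z) :=
    fun z hz => hg.stronglyMeasurableAtFilter isOpen_Ioi z hz
  have hFTC := integral_hasFDerivAt ((hg.mono (uIcc_subset_Ioi hat hbt)).intervalIntegrable)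
    (hmeas _ hat) (hmeas _ hbt) (hcont _ hat) (hcont _ hbt)
  have hpath : HasDerivAt (fun u => (a * u, b * u)) (a, b) t :=
    ((hasDerivAt_id t).const_mul a).prodMk ((hasDerivAt_id t).const_mul b) |>.congr_deriv
      (by simp)
  refine (hFTC.comp_hasDerivAt t hpath).congr_deriv ?_
  simp

theorem sum_integral_eq_sub_of_hasDerivAt {ι E : Type*} [NormedAddCommGroup E] [NormedSpace ℝ E]
    [CompleteSpace E] (u : Finset ι) {F : ℝ → E} {G : ι → ℝ → E} {a b : ℝ}
    (hderiv : ∀ s ∈ uIcc a b, HasDerivAt F (∑ k ∈ u, G k s) s)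
    (hG : ∀ k ∈ u, ContinuousOn (G k) (uIcc a b)) :
    ∑ k ∈ u, ∫ s in a..b, G k s = F b - F a := by
  rw [← integral_finsetSum fun k hk => (hG k hk).intervalIntegrable]
  exact integral_eq_sub_of_hasDerivAt hderiv (continuousOn_finsetSum u hG).intervalIntegrable

noncomputable section

variable {n : ℕ}

local notation "δ[" i ", " j "]" => (if i = j then (1 : ℝ) else 0)

-- `gradForm v` is the linear form `w ↦ ∑ k, v k * w k`, i.e. the differential with gradient `v`.
def gradForm : (Fin n → ℝ) ≃L[ℝ] ((Fin n → ℝ) →L[ℝ] ℝ) :=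
  (ContinuousLinearEquiv.piRing (Fin n)).symm

@[simp]
theorem gradForm_apply_single (v : Fin n → ℝ) (k : Fin n) : gradForm v (Pi.single k 1) = v k := by
  change LinearMap.toContinuousLinearMap ((LinearEquiv.piRing ℝ ℝ (Fin n) ℝ).symm v)
    (Pi.single k 1) = v k
  simp [LinearEquiv.piRing_symm_apply, Pi.single_apply]

theorem eq_gradForm {L : (Fin n → ℝ) →L[ℝ] ℝ} {v : Fin n → ℝ}
    (h : ∀ k, L (Pi.single k 1) = v k) : L = gradForm v :=
  (ContinuousLinearEquiv.piRing (Fin n)).symm_apply_eq.mpr (funext fun k => (h k).symm) |>.symm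

theorem d1_eq_of_hasFDerivAt {f : (Fin n → ℝ) → ℝ} {v x : Fin n → ℝ}
    (h : HasFDerivAt f (gradForm v) x) (k : Fin n) : d1 k f x = v k := by
  rw [d1, h.fderiv, gradForm_apply_single]

theorem hasFDerivAt_intervalIntegral_gradForm {F : (Fin n → ℝ) → ℝ → ℝ}
    {g : Fin n → (Fin n → ℝ) → ℝ → ℝ} {a b : ℝ}
    (hF : ∀ p : (Fin n → ℝ) × ℝ, p.2 ∈ uIcc a b → ContinuousAt (fun q => F q.1 q.2) p)
    (hg : ∀ k, ∀ p : (Fin n → ℝ) × ℝ, p.2 ∈ uIcc a b → ContinuousAt (fun q => g k q.1 q.2) p)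
    (hderiv : ∀ y, ∀ s ∈ uIcc a b, HasFDerivAt (F · s) (gradForm fun k => g k y s) y)
    (x : Fin n → ℝ) :
    HasFDerivAt (fun y => ∫ s in a..b, F y s) (gradForm fun k => ∫ s in a..b, g k x s) x := by
  have hG : ContinuousOn (fun p : (Fin n → ℝ) × ℝ => gradForm fun k => g k p.1 p.2)
      (univ ×ˢ uIcc a b) :=
    gradForm.continuous.comp_continuousOn
      (continuousOn_pi.2 fun k p hp => (hg k p hp.2).continuousWithinAt)
  have hGx : ContinuousOn (fun s => gradForm fun k => g k x s) (uIcc a b) :=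
    gradForm.continuous.comp_continuousOn
      (continuousOn_pi.2 fun k => continuousOn_slice_of_continuousAt (hg k) x)
  refine (hasFDerivAt_intervalIntegral_of_continuousOn (continuousOn_slice_of_continuousAt hF) hG
    hderiv x).congr_fderiv (eq_gradForm fun k => ?_)
  rw [ContinuousLinearMap.intervalIntegral_apply hGx.intervalIntegrable]
  simp only [gradForm_apply_single]

namespace HeatKernel

-- `∂ₗ∂ₖ∂ⱼ∂ᵢ φ₀ = hermite₄ l k i j · φ₀`, and likewise in lower order.
def hermite₁ (i : Fin n) (x : Fin n → ℝ) (s : ℝ) : ℝ := -x i / (2 * s)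

def hermite₂ (i j : Fin n) (x : Fin n → ℝ) (s : ℝ) : ℝ :=
  x i * x j / (4 * s ^ 2) - δ[i, j] / (2 * s)

def hermite₃ (k i j : Fin n) (x : Fin n → ℝ) (s : ℝ) : ℝ :=
  (δ[i, k] * x j + δ[j, k] * x i) / (4 * s ^ 2) + hermite₂ i j x s * hermite₁ k x s

def hermite₄ (l k i j : Fin n) (x : Fin n → ℝ) (s : ℝ) : ℝ :=
  (δ[i, k] * δ[j, l] + δ[j, k] * δ[i, l]) / (4 * s ^ 2)
    + (δ[i, l] * x j + δ[j, l] * x i) / (4 * s ^ 2) * hermite₁ k x s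
    - hermite₂ i j x s * δ[k, l] / (2 * s) + hermite₃ k i j x s * hermite₁ l x s

theorem hermite₂_comm (i j : Fin n) (x : Fin n → ℝ) (s : ℝ) :
    hermite₂ i j x s = hermite₂ j i x s := by
  simp only [hermite₂, mul_comm (x i), eq_comm (a := i)]

theorem hasFDerivAt_phi0 {s : ℝ} (hs : 0 < s) (x : Fin n → ℝ) :
    HasFDerivAt (phi0 n · s) (gradForm fun k => hermite₁ k x s * phi0 n x s) x := by
  have hsq := HasFDerivAt.fun_sum (u := Finset.univ) fun i _ =>
    (hasFDerivAt_apply (𝕜 := ℝ) i x).pow 2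
  have h := ((hsq.fun_neg.mul_const (4 * s)⁻¹).exp).const_mul ((2 * √(π * s)) ^ n)⁻¹
  refine h.congr_fderiv (eq_gradForm fun k => ?_)
  simp only [neg_mul, Nat.add_one_sub_one, pow_one, nsmul_eq_mul, smul_neg, neg_apply,
    smul_apply, sum_apply, ContinuousLinearMap.proj_apply, Pi.single_apply, smul_eq_mul, mul_ite,
    mul_one, mul_zero, Finset.sum_ite_eq', Finset.mem_univ, if_true, hermite₁, phi0]
  field_simp
  ring

theorem hasFDerivAt_mul_phi0 {p : (Fin n → ℝ) → ℝ} {g x : Fin n → ℝ} {s : ℝ}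
    (hp : HasFDerivAt p (gradForm g) x) (hs : 0 < s) :
    HasFDerivAt (fun y => p y * phi0 n y s)
      (gradForm fun k => (g k + p x * hermite₁ k x s) * phi0 n x s) x :=
  (hp.mul (hasFDerivAt_phi0 hs x)).congr_fderiv (eq_gradForm fun k => by
    simp only [add_apply, smul_apply, gradForm_apply_single, smul_eq_mul]; ring)

theorem hasFDerivAt_hermite₁ (i : Fin n) (x : Fin n → ℝ) (s : ℝ) :
    HasFDerivAt (hermite₁ i · s) (gradForm fun k => -δ[i, k] / (2 * s)) x :=
  ((hasFDerivAt_apply i x).fun_neg.mul_const (2 * s)⁻¹).congr_fderiv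
    (eq_gradForm fun k => by simp only [smul_apply,
      neg_apply, ContinuousLinearMap.proj_apply, Pi.single_apply, smul_eq_mul]; ring)

theorem hasFDerivAt_hermite₂ (i j : Fin n) (x : Fin n → ℝ) (s : ℝ) :
    HasFDerivAt (hermite₂ i j · s)
      (gradForm fun k => (δ[i, k] * x j + δ[j, k] * x i) / (4 * s ^ 2)) x :=
  (((hasFDerivAt_apply i x).mul (hasFDerivAt_apply j x)).mul_const (4 * s ^ 2)⁻¹
    |>.sub_const _).congr_fderiv
    (eq_gradForm fun k => by simp only [smul_apply, add_apply,
      ContinuousLinearMap.proj_apply, Pi.single_apply, smul_eq_mul]; ring)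

theorem hasFDerivAt_hermite₃ (k i j : Fin n) (x : Fin n → ℝ) (s : ℝ) :
    HasFDerivAt (hermite₃ k i j · s)
      (gradForm fun l => (δ[i, k] * δ[j, l] + δ[j, k] * δ[i, l]) / (4 * s ^ 2)
        + (δ[i, l] * x j + δ[j, l] * x i) / (4 * s ^ 2) * hermite₁ k x s
        - hermite₂ i j x s * δ[k, l] / (2 * s)) x := by
  have hP := (((hasFDerivAt_apply (𝕜 := ℝ) j x).const_mul δ[i, k]).add
    ((hasFDerivAt_apply (𝕜 := ℝ) i x).const_mul δ[j, k])).mul_const (4 * s ^ 2)⁻¹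
  refine (hP.add ((hasFDerivAt_hermite₂ i j x s).mul (hasFDerivAt_hermite₁ k x s))).congr_fderiv
    (eq_gradForm fun l => ?_)
  simp only [smul_apply, add_apply,
      ContinuousLinearMap.proj_apply, Pi.single_apply, smul_eq_mul, gradForm_apply_single]
  ring

theorem hasFDerivAt_hermite₁_mul_phi0 {s : ℝ} (hs : 0 < s) (i : Fin n) (x : Fin n → ℝ) :
    HasFDerivAt (fun y => hermite₁ i y s * phi0 n y s)
      (gradForm fun k => hermite₂ i k x s * phi0 n x s) x :=
  (hasFDerivAt_mul_phi0 (hasFDerivAt_hermite₁ i x s) hs).congr_fderiv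
    (eq_gradForm fun k => by
      simp only [gradForm_apply_single, hermite₁, hermite₂]; field_simp; ring)

theorem hasFDerivAt_hermite₂_mul_phi0 {s : ℝ} (hs : 0 < s) (i j : Fin n) (x : Fin n → ℝ) :
    HasFDerivAt (fun y => hermite₂ i j y s * phi0 n y s)
      (gradForm fun k => hermite₃ k i j x s * phi0 n x s) x :=
  hasFDerivAt_mul_phi0 (hasFDerivAt_hermite₂ i j x s) hs

theorem hasFDerivAt_hermite₃_mul_phi0 {s : ℝ} (hs : 0 < s) (k i j : Fin n) (x : Fin n → ℝ) :
    HasFDerivAt (fun y => hermite₃ k i j y s * phi0 n y s)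
      (gradForm fun l => hermite₄ l k i j x s * phi0 n x s) x :=
  hasFDerivAt_mul_phi0 (hasFDerivAt_hermite₃ k i j x s) hs

theorem d1_d1_phi0 {s : ℝ} (hs : 0 < s) (i j : Fin n) (x : Fin n → ℝ) :
    d1 j (fun y => d1 i (fun z => phi0 n z s) y) x = hermite₂ i j x s * phi0 n x s := by
  have hd1 : (fun y => d1 i (fun z => phi0 n z s) y) = fun y => hermite₁ i y s * phi0 n y s :=
    funext fun y => d1_eq_of_hasFDerivAt (hasFDerivAt_phi0 hs y) i
  rw [hd1, d1_eq_of_hasFDerivAt (hasFDerivAt_hermite₁_mul_phi0 hs i x) j]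

theorem continuousAt_hermite₂_mul_phi0 (i j : Fin n) {p : (Fin n → ℝ) × ℝ} (hp : 0 < p.2) :
    ContinuousAt (fun q : (Fin n → ℝ) × ℝ => hermite₂ i j q.1 q.2 * phi0 n q.1 q.2) p := by
  simp only [hermite₂, phi0]
  fun_prop (disch := positivity)

theorem continuousAt_hermite₃_mul_phi0 (k i j : Fin n) {p : (Fin n → ℝ) × ℝ} (hp : 0 < p.2) :
    ContinuousAt (fun q : (Fin n → ℝ) × ℝ => hermite₃ k i j q.1 q.2 * phi0 n q.1 q.2) p := by
  simp only [hermite₃, hermite₂, hermite₁, phi0]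
  fun_prop (disch := positivity)

theorem continuousAt_hermite₄_mul_phi0 (l k i j : Fin n) {p : (Fin n → ℝ) × ℝ} (hp : 0 < p.2) :
    ContinuousAt (fun q : (Fin n → ℝ) × ℝ => hermite₄ l k i j q.1 q.2 * phi0 n q.1 q.2) p := by
  simp only [hermite₄, hermite₃, hermite₂, hermite₁, phi0]
  fun_prop (disch := positivity)

theorem hasFDerivAt_integral_hermite₂_mul_phi0 (i j : Fin n) (x : Fin n → ℝ) {a b : ℝ}
    (ha : 0 < a) (hb : 0 < b) :
    HasFDerivAt (fun y => ∫ s in a..b, hermite₂ i j y s * phi0 n y s)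
      (gradForm fun k => ∫ s in a..b, hermite₃ k i j x s * phi0 n x s) x :=
  have hab := uIcc_subset_Ioi ha hb
  hasFDerivAt_intervalIntegral_gradForm (fun _ hp => continuousAt_hermite₂_mul_phi0 i j (hab hp))
    (fun k _ hp => continuousAt_hermite₃_mul_phi0 k i j (hab hp))
    (fun y _ hs => hasFDerivAt_hermite₂_mul_phi0 (hab hs) i j y) x

theorem hasFDerivAt_integral_hermite₃_mul_phi0 (k i j : Fin n) (x : Fin n → ℝ) {a b : ℝ}
    (ha : 0 < a) (hb : 0 < b) :
    HasFDerivAt (fun y => ∫ s in a..b, hermite₃ k i j y s * phi0 n y s)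
      (gradForm fun l => ∫ s in a..b, hermite₄ l k i j x s * phi0 n x s) x :=
  have hab := uIcc_subset_Ioi ha hb
  hasFDerivAt_intervalIntegral_gradForm
    (fun _ hp => continuousAt_hermite₃_mul_phi0 k i j (hab hp))
    (fun l _ hp => continuousAt_hermite₄_mul_phi0 l k i j (hab hp))
    (fun y _ hs => hasFDerivAt_hermite₃_mul_phi0 (hab hs) k i j y) x

theorem sum_hermite₂_diag (x : Fin n → ℝ) (s : ℝ) :
    ∑ k, hermite₂ k k x s = (∑ k, x k ^ 2) / (4 * s ^ 2) - n / (2 * s) := by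
  simp only [hermite₂, if_true, ← sq, Finset.sum_sub_distrib, ← Finset.sum_div, Finset.sum_const,
    Finset.card_univ, Fintype.card_fin, nsmul_eq_mul]
  ring

theorem hasDerivAt_inv_two_sqrt_pi_mul_pow (n : ℕ) {s : ℝ} (hs : 0 < s) :
    HasDerivAt (fun t => ((2 * √(π * t)) ^ n)⁻¹) (-(n / (2 * s)) * ((2 * √(π * s)) ^ n)⁻¹) s := by
  have hu : HasDerivAt (fun t => (2 * √(π * t))⁻¹) (-(1 / (2 * s)) * (2 * √(π * s))⁻¹) s := by
    have := ((((hasDerivAt_id' s).const_mul π).sqrt (by positivity)).const_mul 2).inv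
      (by positivity)
    refine this.congr_deriv ?_
    field_simp
    linear_combination sq_sqrt (by positivity : 0 ≤ π * s)
  simp only [← inv_pow]
  refine (hu.pow n).congr_deriv ?_
  rcases n with _ | n
  · simp
  · simp only [Nat.cast_add, Nat.cast_one, add_tsub_cancel_right, pow_succ]
    ring

theorem hasDerivAt_phi0_time (x : Fin n → ℝ) {s : ℝ} (hs : 0 < s) :
    HasDerivAt (phi0 n x) ((∑ k, hermite₂ k k x s) * phi0 n x s) s := by
  have hexp := (((hasDerivAt_inv hs.ne').const_mul (-(∑ i, x i ^ 2) / 4))).exp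
  have hphi0 : phi0 n x = fun t => ((2 * √(π * t)) ^ n)⁻¹ * exp (-(∑ i, x i ^ 2) / 4 * t⁻¹) := by
    ext t
    rw [phi0, div_mul_eq_div_div, div_eq_mul_inv _ t]
  rw [hphi0]
  refine ((hasDerivAt_inv_two_sqrt_pi_mul_pow n hs).mul hexp).congr_deriv ?_
  rw [sum_hermite₂_diag]
  field_simp
  ring

theorem hasDerivAt_hermite₁_time (i : Fin n) (x : Fin n → ℝ) {s : ℝ} (hs : s ≠ 0) :
    HasDerivAt (hermite₁ i x) (x i / (2 * s ^ 2)) s := by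
  have := (hasDerivAt_inv hs).const_mul (-x i / 2)
  refine (this.congr_of_eventuallyEq (Eventually.of_forall fun t => ?_)).congr_deriv ?_
  · simp only [hermite₁]
    ring
  · field_simp

theorem hasDerivAt_hermite₂_time (i j : Fin n) (x : Fin n → ℝ) {s : ℝ} (hs : s ≠ 0) :
    HasDerivAt (hermite₂ i j x) (-(x i * x j) / (2 * s ^ 3) + δ[i, j] / (2 * s ^ 2)) s := by
  have := ((hasDerivAt_inv hs).fun_pow 2 |>.const_mul (x i * x j / 4)).fun_sub
    ((hasDerivAt_inv hs).const_mul (δ[i, j] / 2))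
  refine (this.congr_of_eventuallyEq (Eventually.of_forall fun t => ?_)).congr_deriv ?_
  · simp only [hermite₂]
    ring
  · norm_num
    field_simp
    ring

-- Normal forms in which the sum over `k` is evaluated by `Finset.sum_ite_eq`.
theorem hermite₃_diag (k j : Fin n) (x : Fin n → ℝ) {s : ℝ} (hs : s ≠ 0) :
    hermite₃ k k j x s
      = x j / (4 * s ^ 2) - x j / (8 * s ^ 3) * x k ^ 2
        + if j = k then x k / (2 * s ^ 2) else 0 := by
  simp only [hermite₃, hermite₂, hermite₁]
  split_ifs <;> subst_vars <;> simp_all <;> field_simp <;> ring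

theorem hermite₄_diag (k i j : Fin n) (x : Fin n → ℝ) {s : ℝ} (hs : s ≠ 0) :
    hermite₄ k k i j x s
      = (if i = k then (if k = j then 1 / (2 * s ^ 2) else 0) - x j * x k / (4 * s ^ 3) else 0)
        - (if j = k then x i * x k / (4 * s ^ 3) else 0)
        + hermite₂ i j x s / (4 * s ^ 2) * x k ^ 2 - hermite₂ i j x s / (2 * s) := by
  simp only [hermite₄, hermite₃, hermite₁]
  split_ifs <;> subst_vars <;> simp_all <;> field_simp <;> ring

theorem sum_hermite₃_diag (j : Fin n) (x : Fin n → ℝ) {s : ℝ} (hs : s ≠ 0) :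
    ∑ k, hermite₃ k k j x s = x j / (2 * s ^ 2) + hermite₁ j x s * ∑ k, hermite₂ k k x s := by
  simp only [hermite₃_diag _ _ _ hs, Finset.sum_add_distrib, Finset.sum_sub_distrib,
    ← Finset.mul_sum, Finset.sum_ite_eq, Finset.mem_univ, if_true, Finset.sum_const,
    Finset.card_univ, Fintype.card_fin, nsmul_eq_mul, sum_hermite₂_diag, hermite₁]
  field_simp
  ring

theorem sum_hermite₄_diag (i j : Fin n) (x : Fin n → ℝ) {s : ℝ} (hs : s ≠ 0) :
    ∑ k, hermite₄ k k i j x s = -(x i * x j) / (2 * s ^ 3) + δ[i, j] / (2 * s ^ 2)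
      + hermite₂ i j x s * ∑ k, hermite₂ k k x s := by
  simp only [hermite₄_diag _ _ _ _ hs, Finset.sum_add_distrib, Finset.sum_sub_distrib,
    ← Finset.mul_sum, Finset.sum_ite_eq, Finset.mem_univ, if_true, Finset.sum_const,
    Finset.card_univ, Fintype.card_fin, nsmul_eq_mul, sum_hermite₂_diag]
  split_ifs <;> field_simp <;> ring

theorem hasDerivAt_hermite₁_mul_phi0_time (j : Fin n) (x : Fin n → ℝ) {s : ℝ} (hs : 0 < s) :
    HasDerivAt (fun t => hermite₁ j x t * phi0 n x t) (∑ k, hermite₃ k k j x s * phi0 n x s) s :=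
  ((hasDerivAt_hermite₁_time j x hs.ne').mul (hasDerivAt_phi0_time x hs)).congr_deriv
    (by rw [← Finset.sum_mul, sum_hermite₃_diag j x hs.ne']; ring)

theorem hasDerivAt_hermite₂_mul_phi0_time (i j : Fin n) (x : Fin n → ℝ) {s : ℝ} (hs : 0 < s) :
    HasDerivAt (fun t => hermite₂ i j x t * phi0 n x t)
      (∑ k, hermite₄ k k i j x s * phi0 n x s) s :=
  ((hasDerivAt_hermite₂_time i j x hs.ne').mul (hasDerivAt_phi0_time x hs)).congr_deriv
    (by rw [← Finset.sum_mul, sum_hermite₄_diag i j x hs.ne']; ring)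

theorem sum_integral_hermite₃_diag_mul_phi0 (j : Fin n) (x : Fin n → ℝ) {a b : ℝ} (ha : 0 < a)
    (hb : 0 < b) :
    ∑ k, ∫ s in a..b, hermite₃ k k j x s * phi0 n x s
      = hermite₁ j x b * phi0 n x b - hermite₁ j x a * phi0 n x a :=
  have hab := uIcc_subset_Ioi ha hb
  sum_integral_eq_sub_of_hasDerivAt _ (fun _ hs => hasDerivAt_hermite₁_mul_phi0_time j x (hab hs))
    fun k _ => continuousOn_slice_of_continuousAt
      (fun _ hp => continuousAt_hermite₃_mul_phi0 k k j (hab hp)) x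

theorem sum_integral_hermite₄_diag_mul_phi0 (i j : Fin n) (x : Fin n → ℝ) {a b : ℝ} (ha : 0 < a)
    (hb : 0 < b) :
    ∑ k, ∫ s in a..b, hermite₄ k k i j x s * phi0 n x s
      = hermite₂ i j x b * phi0 n x b - hermite₂ i j x a * phi0 n x a :=
  have hab := uIcc_subset_Ioi ha hb
  sum_integral_eq_sub_of_hasDerivAt _
    (fun _ hs => hasDerivAt_hermite₂_mul_phi0_time i j x (hab hs))
    fun k _ => continuousOn_slice_of_continuousAt
      (fun _ hp => continuousAt_hermite₄_mul_phi0 k k i j (hab hp)) x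

end HeatKernel

open HeatKernel

section Lame

variable {μ lam t : ℝ}

theorem PhiL_eq_phi0_add_integral (hμ : 0 < μ) (hc : 0 < 2 * μ + lam) (ht : 0 < t)
    (i j : Fin n) (x : Fin n → ℝ) :
    PhiL n μ lam i j x t = phi0 n x (μ * t) * δ[i, j]
      + ∫ s in (μ * t)..((2 * μ + lam) * t), hermite₂ i j x s * phi0 n x s := by
  rw [PhiL]
  congr 1
  exact integral_congr fun s hs =>
    d1_d1_phi0 (uIcc_subset_Ioi (by positivity) (by positivity) hs) i j x

theorem hasFDerivAt_PhiL (hμ : 0 < μ) (hc : 0 < 2 * μ + lam) (ht : 0 < t) (i j : Fin n)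
    (x : Fin n → ℝ) :
    HasFDerivAt (fun y => PhiL n μ lam i j y t)
      (gradForm fun k => hermite₁ k x (μ * t) * phi0 n x (μ * t) * δ[i, j]
        + ∫ s in (μ * t)..((2 * μ + lam) * t), hermite₃ k i j x s * phi0 n x s) x := by
  simp only [PhiL_eq_phi0_add_integral hμ hc ht]
  exact (((hasFDerivAt_phi0 (by positivity) x).mul_const δ[i, j]).add
    (hasFDerivAt_integral_hermite₂_mul_phi0 i j x (by positivity) (by positivity))).congr_fderiv
    (eq_gradForm fun k => by
      simp only [add_apply, smul_apply, gradForm_apply_single, smul_eq_mul]; ring)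

theorem d1_PhiL (hμ : 0 < μ) (hc : 0 < 2 * μ + lam) (ht : 0 < t) (k i j : Fin n) :
    (fun y => d1 k (fun z => PhiL n μ lam i j z t) y)
      = fun y => hermite₁ k y (μ * t) * phi0 n y (μ * t) * δ[i, j]
        + ∫ s in (μ * t)..((2 * μ + lam) * t), hermite₃ k i j y s * phi0 n y s :=
  funext fun y => d1_eq_of_hasFDerivAt (hasFDerivAt_PhiL hμ hc ht i j y) k

theorem hasFDerivAt_d1_PhiL (hμ : 0 < μ) (hc : 0 < 2 * μ + lam) (ht : 0 < t) (k i j : Fin n)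
    (x : Fin n → ℝ) :
    HasFDerivAt (fun y => d1 k (fun z => PhiL n μ lam i j z t) y)
      (gradForm fun l => hermite₂ k l x (μ * t) * phi0 n x (μ * t) * δ[i, j]
        + ∫ s in (μ * t)..((2 * μ + lam) * t), hermite₄ l k i j x s * phi0 n x s) x := by
  rw [d1_PhiL hμ hc ht]
  exact (((hasFDerivAt_hermite₁_mul_phi0 (by positivity) k x).mul_const δ[i, j]).fun_add
    (hasFDerivAt_integral_hermite₃_mul_phi0 k i j x (by positivity) (by positivity))).congr_fderiv
    (eq_gradForm fun l => by
      simp only [add_apply, smul_apply, gradForm_apply_single, smul_eq_mul]; ring)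

theorem hasDerivAt_PhiL_time (hμ : 0 < μ) (hc : 0 < 2 * μ + lam) (ht : 0 < t) (i j : Fin n)
    (x : Fin n → ℝ) :
    HasDerivAt (fun u => PhiL n μ lam i j x u)
      (μ * ((∑ k, hermite₂ k k x (μ * t)) * phi0 n x (μ * t)) * δ[i, j]
        + ((2 * μ + lam) * (hermite₂ i j x ((2 * μ + lam) * t) * phi0 n x ((2 * μ + lam) * t))
          - μ * (hermite₂ i j x (μ * t) * phi0 n x (μ * t)))) t := by
  have hphi0 := ((hasDerivAt_phi0_time x (by positivity)).comp t
    ((hasDerivAt_id' t).const_mul μ)).mul_const δ[i, j]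
  have hint := hasDerivAt_intervalIntegral_mul_mul
    (continuousOn_slice_of_continuousAt (fun _ hp => continuousAt_hermite₂_mul_phi0 i j hp) x)
    hμ hc ht
  refine ((hphi0.add hint).congr_of_eventuallyEq ?_).congr_deriv ?_
  · filter_upwards [Ioi_mem_nhds ht] with u hu
    exact PhiL_eq_phi0_add_integral hμ hc hu i j x
  · simp only [smul_eq_mul]
    ring

theorem lap_PhiL (hμ : 0 < μ) (hc : 0 < 2 * μ + lam) (ht : 0 < t) (i j : Fin n)
    (x : Fin n → ℝ) :
    lap (fun y => PhiL n μ lam i j y t) x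
      = δ[i, j] * ((∑ k, hermite₂ k k x (μ * t)) * phi0 n x (μ * t))
        + (hermite₂ i j x ((2 * μ + lam) * t) * phi0 n x ((2 * μ + lam) * t)
          - hermite₂ i j x (μ * t) * phi0 n x (μ * t)) := by
  change ∑ k, d1 k (fun y => d1 k (fun z => PhiL n μ lam i j z t) y) x = _
  simp only [fun k => d1_eq_of_hasFDerivAt (hasFDerivAt_d1_PhiL hμ hc ht k i j x) k,
    Finset.sum_add_distrib, ← Finset.sum_mul,
    sum_integral_hermite₄_diag_mul_phi0 i j x (by positivity : 0 < μ * t)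
      (by positivity : 0 < (2 * μ + lam) * t)]
  ring

theorem d1_sum_d1_PhiL (hμ : 0 < μ) (hc : 0 < 2 * μ + lam) (ht : 0 < t) (i j : Fin n)
    (x : Fin n → ℝ) :
    d1 i (fun y => ∑ k, d1 k (fun z => PhiL n μ lam k j z t) y) x
      = hermite₂ i j x ((2 * μ + lam) * t) * phi0 n x ((2 * μ + lam) * t) := by
  have hμt : 0 < μ * t := by positivity
  have hct : 0 < (2 * μ + lam) * t := by positivity
  have hdiv : (fun y => ∑ k, d1 k (fun z => PhiL n μ lam k j z t) y)
      = fun y => hermite₁ j y ((2 * μ + lam) * t) * phi0 n y ((2 * μ + lam) * t) := by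
    ext y
    simp only [fun k => congrFun (d1_PhiL hμ hc ht k k j) y, Finset.sum_add_distrib,
      sum_integral_hermite₃_diag_mul_phi0 j y hμt hct, mul_ite, mul_one, mul_zero,
      Finset.sum_ite_eq', Finset.mem_univ, if_true]
    ring
  rw [hdiv, d1_eq_of_hasFDerivAt (hasFDerivAt_hermite₁_mul_phi0 hct j x) i, hermite₂_comm]

end Lame

end

theorem lame_fundamental_solution_general (n : ℕ) (μ lam : ℝ)
    (hμ : 0 < μ) (hc : 0 < 2 * μ + lam) (i j : Fin n) :
    ∀ (x : Fin n → ℝ) (t : ℝ), 0 < t → x ≠ 0 →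
      deriv (fun s => PhiL n μ lam i j x s) t
        - μ * lap (fun y => PhiL n μ lam i j y t) x
        - (lam + μ) * d1 i (fun y => ∑ k, d1 k (fun z => PhiL n μ lam k j z t) y) x
        = 0 := by
  intro x t ht _
  rw [(hasDerivAt_PhiL_time hμ hc ht i j x).deriv, lap_PhiL hμ hc ht i j x,
    d1_sum_d1_PhiL hμ hc ht i j x]
  ring

/-- For t > 0 and x ≠ 0, the matrix (φᵢⱼ) satisfies the constant-coefficient parabolic
Lamé system ∂φᵢⱼ/∂t − μΔφᵢⱼ − (λ+μ)∂/∂xᵢ(Σ_k ∂φ_{kj}/∂x_k) = 0. -/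
theorem lame_fundamental_solution (n : ℕ) (hn : 2 ≤ n) (μ lam : ℝ)
    (hμ : 0 < μ) (hc : 0 < 2 * μ + lam) (i j : Fin n) :
    ∀ (x : Fin n → ℝ) (t : ℝ), 0 < t → x ≠ 0 →
      deriv (fun s => PhiL n μ lam i j x s) t
        - μ * lap (fun y => PhiL n μ lam i j y t) x
        - (lam + μ) * d1 i (fun y => ∑ k, d1 k (fun z => PhiL n μ lam k j z t) y) x
        = 0 :=
  lame_fundamental_solution_general n μ lam hμ hc i j
end
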